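/- arXiv:1002.1986 — 2 statements merged into one kernel-verified Lean document; each statement's English description precedes it below -/
import Mathlib

section
/- Averaging lemma (Lemma 5.1 of the paper): Let d ≥ 1, let (p_k)_{k∈ℤ^d} be complex numbers with Σ_{k∈ℤ^d} |p_k| < ∞, and let p : ℝ^d → ℂ be the 1-periodic function p(x) = Σ_{k∈ℤ^d} p_k e^{2πi k·x}. Let G : ℝ^d → ℂ be a Schwartz function. Then for every natural number q ≥ 1 there exists a constant C = C(G,q,d) > 0 such that for all 0 < ε ≤ 1, | ε^d ∫_{ℝ^d} p(x) G(εx) dx − p_0 ∫_{ℝ^d} G(y) dy | ≤ C ε^q Σ_{k∈ℤ^d, k≠0} |p_k|, where p_0 is the Fourier coefficient of frequency k = 0 (i.e. the average of p over its period cell). -/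
/-!
Expanding `p` in its Fourier series and integrating term by term, the substitution `y = εx`
turns `ε^d ∫ p(x) G(εx) dx` into `∑ₖ p_k Ĝ(-k/ε)`. The term `k = 0` is `p₀ ∫ G`. Every other
frequency has `|k| ≥ 1`, so the decay `|ξ|^q |Ĝ(ξ)| ≤ C` of the Fourier transform of a Schwartz
function bounds the remaining terms by `C ε^q |p_k|`.
-/

open MeasureTheory Complex Real FourierTransform Module
open scoped RealInnerProductSpace

theorem norm_tsum_mul_sub_mul_le {ι R : Type*} [DecidableEq ι] [NormedRing R] [CompleteSpace R]
    {c a : ι → R} (hc : Summable fun k => ‖c k‖) (k₀ : ι) {B : ℝ}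
    (ha : ∀ k, k ≠ k₀ → ‖a k‖ ≤ B) :
    ‖∑' k, c k * a k - c k₀ * a k₀‖ ≤ B * ∑' k, if k = k₀ then 0 else ‖c k‖ := by
  have hca : Summable fun k => c k * a k := by
    refine Summable.of_norm_bounded (hc.mul_right (max B ‖a k₀‖)) fun k => ?_
    refine (norm_mul_le _ _).trans (mul_le_mul_of_nonneg_left ?_ (norm_nonneg _))
    rcases eq_or_ne k k₀ with rfl | hk
    · exact le_max_right _ _
    · exact (ha k hk).trans (le_max_left _ _)
  have hc' : Summable fun k => if k = k₀ then 0 else ‖c k‖ :=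
    hc.of_nonneg_of_le (fun k => by split_ifs <;> simp) fun k => by split_ifs <;> simp
  rw [hca.tsum_eq_add_tsum_ite k₀, add_sub_cancel_left]
  refine tsum_of_norm_bounded (hc'.hasSum.mul_left B) fun k => ?_
  split_ifs with hk
  · simp
  · rw [mul_comm B]
    exact (norm_mul_le _ _).trans (mul_le_mul_of_nonneg_left (ha k hk) (norm_nonneg _))

section Fourier

variable {V E : Type*} [NormedAddCommGroup V] [InnerProductSpace ℝ V] [FiniteDimensional ℝ V]
  [MeasurableSpace V] [BorelSpace V] [NormedAddCommGroup E] [NormedSpace ℂ E]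

theorem Real.fourier_comp_smul (f : V → E) {R : ℝ} (hR : R ≠ 0) (w : V) :
    𝓕 (fun x => f (R • x)) w = |(R ^ finrank ℝ V)⁻¹| • 𝓕 f (R⁻¹ • w) := by
  simp only [Real.fourier_eq]
  rw [← Measure.integral_comp_smul volume (fun y => 𝐞 (-⟪y, R⁻¹ • w⟫) • f y) R]
  congr 1
  ext x
  rw [real_inner_smul_left, real_inner_smul_right, mul_inv_cancel_left₀ hR]

theorem Real.fourier_apply_zero (f : V → E) : 𝓕 f 0 = ∫ x, f x := by
  simp [Real.fourier_eq]

theorem SchwartzMap.exists_pow_mul_norm_fourier_le (f : SchwartzMap V E) (q : ℕ) :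
    ∃ C, 0 < C ∧ ∀ ξ, ‖ξ‖ ^ q * ‖𝓕 (f : V → E) ξ‖ ≤ C := by
  obtain ⟨C, hC₀, hC⟩ := (𝓕 f).decay q 0
  refine ⟨C, hC₀, fun ξ => ?_⟩
  have hξ := hC ξ
  rwa [norm_iteratedFDeriv_zero] at hξ

theorem integral_tsum_fourierChar_mul {ι : Type*} [Countable ι] {c : ι → ℂ}
    (hc : Summable fun k => ‖c k‖) (ω : ι → V) {g : V → E} (hg : Integrable g) :
    ∫ x, (∑' k, c k * 𝐞 ⟪x, ω k⟫) • g x = ∑' k, c k • 𝓕 g (-ω k) := by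
  have hnorm (k : ι) (x : V) : ‖c k * 𝐞 ⟪x, ω k⟫‖ = ‖c k‖ := by
    rw [norm_mul, Circle.norm_coe, mul_one]
  have hint (k : ι) : Integrable fun x => (c k * 𝐞 ⟪x, ω k⟫) • g x :=
    hg.bdd_smul ‖c k‖
      (by fun_prop : Continuous fun x => c k * (𝐞 ⟪x, ω k⟫ : ℂ)).aestronglyMeasurable
      (.of_forall fun x => (hnorm k x).le)
  have hsum : Summable fun k => ∫ x, ‖(c k * 𝐞 ⟪x, ω k⟫) • g x‖ := by
    simpa only [norm_smul, hnorm, integral_const_mul] using hc.mul_right (∫ x, ‖g x‖)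
  have hterm (k : ι) : ∫ x, (c k * 𝐞 ⟪x, ω k⟫) • g x = c k • 𝓕 g (-ω k) := by
    simp only [mul_smul, integral_smul, Real.fourier_eq, inner_neg_right, neg_neg,
      Circle.smul_def]
  simp_rw [← hterm]
  rw [integral_tsum_of_summable_integral_norm hint hsum]
  refine integral_congr_ae (.of_forall fun x => ?_)
  exact ((Summable.of_norm_bounded hc fun k => (hnorm k x).le).tsum_smul_const (g x)).symm

theorem norm_integral_tsum_fourierChar_mul_comp_smul_sub_le {ι : Type*} [Countable ι]
    [DecidableEq ι] {f : V → ℂ} (hf : Integrable f) {q : ℕ} {C : ℝ}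
    (hC : ∀ ξ, ‖ξ‖ ^ q * ‖𝓕 f ξ‖ ≤ C) {c : ι → ℂ} (hc : Summable fun k => ‖c k‖)
    {ω : ι → V} {k₀ : ι} (hω₀ : ω k₀ = 0) (hω : ∀ k, k ≠ k₀ → 1 ≤ ‖ω k‖) {ε : ℝ} (hε : 0 < ε) :
    ‖((ε : ℂ) ^ finrank ℝ V * ∫ x, (∑' k, c k * 𝐞 ⟪x, ω k⟫) * f (ε • x)) - c k₀ * ∫ x, f x‖ ≤
      C * ε ^ q * ∑' k, if k = k₀ then 0 else ‖c k‖ := by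
  have hseries : (ε : ℂ) ^ finrank ℝ V * ∫ x, (∑' k, c k * 𝐞 ⟪x, ω k⟫) * f (ε • x) =
      ∑' k, c k * 𝓕 f (-(ε⁻¹ • ω k)) := by
    have hswap : ∫ x, (∑' k, c k * 𝐞 ⟪x, ω k⟫) * f (ε • x) =
        ∑' k, c k * 𝓕 (fun x => f (ε • x)) (-ω k) :=
      integral_tsum_fourierChar_mul hc ω (hf.comp_smul hε.ne')
    rw [hswap, ← tsum_mul_left]
    refine tsum_congr fun k => ?_
    rw [Real.fourier_comp_smul f hε.ne', abs_of_pos (by positivity), smul_neg, Complex.real_smul]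
    have hεn : (ε : ℂ) ^ finrank ℝ V ≠ 0 := pow_ne_zero _ (by exact_mod_cast hε.ne')
    push_cast
    field_simp
  have hdecay (k : ι) (hk : k ≠ k₀) : ‖𝓕 f (-(ε⁻¹ • ω k))‖ ≤ C * ε ^ q := by
    have hξ : ε⁻¹ ≤ ‖-(ε⁻¹ • ω k)‖ := by
      rw [norm_neg, norm_smul, Real.norm_of_nonneg (by positivity)]
      exact le_mul_of_one_le_right (by positivity) (hω k hk)
    have hpow := (mul_le_mul_of_nonneg_right (pow_le_pow_left₀ (by positivity) hξ q)
      (norm_nonneg _)).trans (hC _)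
    rwa [inv_pow, inv_mul_le_iff₀ (by positivity), mul_comm] at hpow
  have hzero : ∫ x, f x = 𝓕 f (-(ε⁻¹ • ω k₀)) := by
    rw [hω₀, smul_zero, neg_zero, Real.fourier_apply_zero]
  rw [hseries, hzero]
  exact norm_tsum_mul_sub_mul_le hc k₀ hdecay

end Fourier

theorem cexp_two_pi_I_sum_mul_eq_fourierChar_inner {ι : Type*} [Fintype ι] (k : ι → ℝ)
    (y : EuclideanSpace ℝ ι) :
    Complex.exp (2 * π * I * ((∑ i, k i * y i : ℝ) : ℂ)) = 𝐞 ⟪y, WithLp.toLp 2 k⟫ := by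
  rw [Real.fourierChar_apply, PiLp.inner_apply]
  simp only [RCLike.inner_apply, conj_trivial, ofReal_mul, ofReal_ofNat]
  congr 1
  ring

theorem one_le_norm_toLp_intCast {ι : Type*} [Fintype ι] {k : ι → ℤ} (hk : k ≠ 0) :
    1 ≤ ‖WithLp.toLp 2 fun i => (k i : ℝ)‖ := by
  obtain ⟨i, hi⟩ := Function.ne_iff.1 hk
  calc (1 : ℝ) ≤ |(k i : ℝ)| := by exact_mod_cast Int.one_le_abs hi
    _ ≤ _ := PiLp.norm_apply_le (WithLp.toLp 2 fun i => (k i : ℝ)) i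

theorem averaging_lemma_general (d : ℕ) (c : (Fin d → ℤ) → ℂ)
    (hc : Summable fun k => ‖c k‖)
    (p : (Fin d → ℝ) → ℂ)
    (hp : ∀ x : Fin d → ℝ, p x = ∑' k : Fin d → ℤ,
      c k * Complex.exp (2 * Real.pi * Complex.I * ((∑ i, (k i : ℝ) * x i : ℝ) : ℂ)))
    (G : SchwartzMap (Fin d → ℝ) ℂ) (q : ℕ) :
    ∃ C : ℝ, 0 < C ∧ ∀ ε : ℝ, 0 < ε → ε ≤ 1 →
      ‖((ε : ℂ) ^ d * ∫ x : Fin d → ℝ, p x * G (ε • x)) -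
          c 0 * ∫ y : Fin d → ℝ, G y‖ ≤
        C * ε ^ q * ∑' k : Fin d → ℤ, (if k = 0 then 0 else ‖c k‖) := by
  -- `Fin d → ℝ` carries the sup norm, so the Fourier analysis is done on `EuclideanSpace ℝ (Fin d)`.
  let G' := SchwartzMap.compCLMOfContinuousLinearEquiv ℝ (EuclideanSpace.equiv (Fin d) ℝ) G
  have hG' (y : EuclideanSpace ℝ (Fin d)) : G' y = G (WithLp.ofLp y) := rfl
  have integral_ofLp (g : (Fin d → ℝ) → ℂ) :
      ∫ y : EuclideanSpace ℝ (Fin d), g (WithLp.ofLp y) = ∫ x, g x :=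
    (EuclideanSpace.volume_preserving_symm_measurableEquiv_toLp (Fin d)).integral_comp' g
  obtain ⟨C, hC₀, hC⟩ := G'.exists_pow_mul_norm_fourier_le q
  refine ⟨C, hC₀, fun ε hε _ => ?_⟩
  have hbound := norm_integral_tsum_fourierChar_mul_comp_smul_sub_le G'.integrable hC hc
    (ω := fun k => WithLp.toLp 2 fun i => (k i : ℝ)) (k₀ := 0) (by ext; simp)
    (fun k hk => one_le_norm_toLp_intCast hk) hε
  simp only [finrank_euclideanSpace_fin, hG', ← cexp_two_pi_I_sum_mul_eq_fourierChar_inner,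
    WithLp.ofLp_smul, ← hp, integral_ofLp G] at hbound
  rwa [integral_ofLp fun x => p x * G (ε • x)] at hbound

/-- Averaging lemma (Lemma 5.1): for a 1-periodic function `p` with absolutely summable
Fourier coefficients `c k`, and a Schwartz function `G`, the rescaled integral
`ε^d ∫ p(x) G(εx) dx` converges to `p₀ ∫ G` faster than any power of `ε`. -/
theorem averaging_lemma (d : ℕ) (hd : 1 ≤ d) (c : (Fin d → ℤ) → ℂ)
    (hc : Summable fun k => ‖c k‖)
    (p : (Fin d → ℝ) → ℂ)
    (hp : ∀ x : Fin d → ℝ, p x = ∑' k : Fin d → ℤ,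
      c k * Complex.exp (2 * Real.pi * Complex.I * ((∑ i, (k i : ℝ) * x i : ℝ) : ℂ)))
    (G : SchwartzMap (Fin d → ℝ) ℂ) (q : ℕ) (hq : 1 ≤ q) :
    ∃ C : ℝ, 0 < C ∧ ∀ ε : ℝ, 0 < ε → ε ≤ 1 →
      ‖((ε : ℂ) ^ d * ∫ x : Fin d → ℝ, p x * G (ε • x)) -
          c 0 * ∫ y : Fin d → ℝ, G y‖ ≤
        C * ε ^ q * ∑' k : Fin d → ℤ, (if k = 0 then 0 else ‖c k‖) :=
  averaging_lemma_general d c hc p hp G q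
end

section
/- Explicit quintic-term integral of the quintic Townes soliton (Appendix D): Let R(y) := 3^{1/4} (sech(2y))^{1/2}, the positive solution of −R'' + R − R⁵ = 0 on ℝ, and let G(y) := −(1/2)(R(y)/2 + y R'(y)). Then ∫_ℝ (d²/dy²)(R(y)⁵) · G(y) dy = (13√3/16) π. Equivalently, ∫_ℝ (R⁵)''(y) (R(y)/2 + y R'(y)) dy = −(13√3/8) π. -/
open Real MeasureTheory Filter Topology

/-! Put `q = √(sech 2y)`, so that `R = 3^(1/4) q`, `q' = -sinh (2y) q³` and `q² = sech 2y`.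
Then `(R⁵)'' G` is `15√3/2` times a combination of `sech³ 2y`, `sech⁵ 2y` and
`y sinh 2y sech⁴ 2y`, `y sinh 2y sech⁶ 2y`, which has an explicit odd primitive. Every term of
that primitive decays like `sech 2y` except `arctan (sinh 2y)`, a primitive of `2 sech 2y`; its
limits `±π/2` at `±∞` produce the factor `π`. -/

lemma abs_sinh_le_cosh (x : ℝ) : |sinh x| ≤ cosh x := by
  rw [abs_sinh, ← cosh_abs]
  exact (sinh_lt_cosh _).le

lemma one_add_sq_le_cosh_two_mul (y : ℝ) : 1 + y ^ 2 ≤ cosh (2 * y) := by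
  have h : |y| ≤ |sinh y| := by
    rw [abs_sinh]
    exact self_le_sinh_iff.mpr (abs_nonneg y)
  have h2 : y ^ 2 ≤ sinh y ^ 2 := sq_le_sq.mpr h
  rw [cosh_two_mul, cosh_sq]
  linarith [sq_nonneg (sinh y)]

lemma abs_le_cosh_two_mul (y : ℝ) : |y| ≤ cosh (2 * y) := by
  nlinarith [one_add_sq_le_cosh_two_mul y, sq_abs y, sq_nonneg (|y| - 1)]

lemma abs_div_pow_le_inv {x c : ℝ} {m k : ℕ} (hc : 1 ≤ c) (hx : |x| ≤ c ^ m) (hmk : m < k) :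
    |x / c ^ k| ≤ c⁻¹ := by
  have hc0 : 0 < c := one_pos.trans_le hc
  rw [abs_div, abs_of_pos (pow_pos hc0 k), div_le_iff₀ (pow_pos hc0 k)]
  calc |x| ≤ c ^ m := hx
    _ ≤ c ^ (k - 1) := pow_le_pow_right₀ hc (by omega)
    _ = c⁻¹ * c ^ k := by
      rw [← pow_sub_one_mul (by omega : k ≠ 0) c]
      field_simp

lemma tendsto_inv_cosh_two_mul_atTop : Tendsto (fun y => (cosh (2 * y))⁻¹) atTop (𝓝 0) :=
  (tendsto_atTop_mono (fun y => (le_abs_self y).trans (abs_le_cosh_two_mul y))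
    tendsto_id).inv_tendsto_atTop

lemma integrable_inv_cosh_two_mul : Integrable fun y => (cosh (2 * y))⁻¹ := by
  refine integrable_inv_one_add_sq.mono' (by fun_prop) (.of_forall fun y => ?_)
  rw [norm_inv, norm_of_nonneg (cosh_pos _).le]
  exact inv_anti₀ (by positivity) (one_add_sq_le_cosh_two_mul y)

section DivCoshPow

variable {f : ℝ → ℝ} {m k : ℕ}

lemma tendsto_div_cosh_two_mul_pow_atTop (hf : ∀ y, |f y| ≤ cosh (2 * y) ^ m) (hmk : m < k) :
    Tendsto (fun y => f y / cosh (2 * y) ^ k) atTop (𝓝 0) :=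
  squeeze_zero_norm (fun y => abs_div_pow_le_inv (one_le_cosh _) (hf y) hmk)
    tendsto_inv_cosh_two_mul_atTop

lemma integrable_div_cosh_two_mul_pow (hf_meas : Measurable f)
    (hf : ∀ y, |f y| ≤ cosh (2 * y) ^ m) (hmk : m < k) :
    Integrable fun y => f y / cosh (2 * y) ^ k :=
  integrable_inv_cosh_two_mul.mono' (hf_meas.div (by fun_prop)).aestronglyMeasurable
    (.of_forall fun y => abs_div_pow_le_inv (one_le_cosh _) (hf y) hmk)

end DivCoshPow

noncomputable def quinticIntegrand (y : ℝ) : ℝ :=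
  -(5 / 2) * (1 / cosh (2 * y) ^ 3) + 7 / 2 * (1 / cosh (2 * y) ^ 5)
    + 5 * (y * sinh (2 * y) / cosh (2 * y) ^ 4) - 7 * (y * sinh (2 * y) / cosh (2 * y) ^ 6)

noncomputable def quinticPrimitive (y : ℝ) : ℝ :=
  13 / 120 * (sinh (2 * y) / cosh (2 * y) ^ 2 + arctan (sinh (2 * y)))
    + 7 / 20 * (sinh (2 * y) / cosh (2 * y) ^ 4)
    - 5 / 6 * (y / cosh (2 * y) ^ 3) + 7 / 10 * (y / cosh (2 * y) ^ 5)

lemma hasDerivAt_quinticPrimitive (y : ℝ) :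
    HasDerivAt quinticPrimitive (quinticIntegrand y) y := by
  have hs := ((hasDerivAt_id' y).const_mul 2).sinh
  have hc := ((hasDerivAt_id' y).const_mul 2).cosh
  have hc0 (n : ℕ) : cosh (2 * y) ^ n ≠ 0 := pow_ne_zero n (cosh_pos _).ne'
  have hs2 := (hs.fun_div (hc.fun_pow 2) (hc0 2)).add hs.arctan
  have hs4 := hs.fun_div (hc.fun_pow 4) (hc0 4)
  have hy3 := (hasDerivAt_id' y).fun_div (hc.fun_pow 3) (hc0 3)
  have hy5 := (hasDerivAt_id' y).fun_div (hc.fun_pow 5) (hc0 5)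
  refine ((((hs2.const_mul (13 / 120)).add (hs4.const_mul (7 / 20))).sub
    (hy3.const_mul (5 / 6))).add (hy5.const_mul (7 / 10))).congr_deriv ?_
  simp only [quinticIntegrand]
  rw [← cosh_sq']
  field_simp
  rw [sinh_sq]
  ring

lemma tendsto_quinticPrimitive_atTop :
    Tendsto quinticPrimitive atTop (𝓝 (13 / 120 * (π / 2))) := by
  have hs : ∀ y, |sinh (2 * y)| ≤ cosh (2 * y) ^ 1 := fun y => by
    simpa using abs_sinh_le_cosh (2 * y)
  have hy : ∀ y, |y| ≤ cosh (2 * y) ^ 1 := fun y => by simpa using abs_le_cosh_two_mul y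
  have hsinh : Tendsto (fun y => sinh (2 * y)) atTop atTop :=
    tendsto_atTop_mono' _ ((eventually_ge_atTop 0).mono fun y hy =>
      (by linarith : y ≤ 2 * y).trans (self_le_sinh_iff.mpr (by linarith))) tendsto_id
  have hs2 := (tendsto_div_cosh_two_mul_pow_atTop hs one_lt_two).add
    ((tendsto_nhds_of_tendsto_nhdsWithin tendsto_arctan_atTop).comp hsinh)
  have hs4 := tendsto_div_cosh_two_mul_pow_atTop hs (by norm_num : 1 < 4)
  have hy3 := tendsto_div_cosh_two_mul_pow_atTop hy (by norm_num : 1 < 3)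
  have hy5 := tendsto_div_cosh_two_mul_pow_atTop hy (by norm_num : 1 < 5)
  convert (((hs2.const_mul (13 / 120)).add (hs4.const_mul (7 / 20))).sub
    (hy3.const_mul (5 / 6))).add (hy5.const_mul (7 / 10)) using 2
  · rfl
  · norm_num

lemma quinticPrimitive_neg (y : ℝ) : quinticPrimitive (-y) = -quinticPrimitive y := by
  simp only [quinticPrimitive, mul_neg, sinh_neg, cosh_neg, arctan_neg]
  ring

lemma tendsto_quinticPrimitive_atBot :
    Tendsto quinticPrimitive atBot (𝓝 (-(13 / 120 * (π / 2)))) := by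
  refine ((tendsto_quinticPrimitive_atTop.comp tendsto_neg_atBot_atTop).neg).congr fun y => ?_
  simp [quinticPrimitive_neg]

lemma integrable_quinticIntegrand : Integrable quinticIntegrand := by
  have hone : ∀ y, |(1 : ℝ)| ≤ cosh (2 * y) ^ 0 := fun y => by simp
  have hys : ∀ y, |y * sinh (2 * y)| ≤ cosh (2 * y) ^ 2 := fun y => by
    rw [abs_mul, sq]
    exact mul_le_mul (abs_le_cosh_two_mul y) (abs_sinh_le_cosh _) (abs_nonneg _)
      (cosh_pos _).le
  have hmeas : Measurable fun y : ℝ => y * sinh (2 * y) := by fun_prop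
  have h3 := integrable_div_cosh_two_mul_pow measurable_const hone (by norm_num : 0 < 3)
  have h5 := integrable_div_cosh_two_mul_pow measurable_const hone (by norm_num : 0 < 5)
  have hys4 := integrable_div_cosh_two_mul_pow hmeas hys (by norm_num : 2 < 4)
  have hys6 := integrable_div_cosh_two_mul_pow hmeas hys (by norm_num : 2 < 6)
  exact (((h3.const_mul _).add (h5.const_mul _)).add (hys4.const_mul _)).sub (hys6.const_mul _)

lemma integral_quinticIntegrand : ∫ y, quinticIntegrand y = 13 * π / 120 := by
  rw [integral_of_hasDerivAt_of_tendsto hasDerivAt_quinticPrimitive integrable_quinticIntegrand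
    tendsto_quinticPrimitive_atBot tendsto_quinticPrimitive_atTop]
  ring

noncomputable def sqrtSechTwoMul (y : ℝ) : ℝ := √(1 / cosh (2 * y))

lemma sqrtSechTwoMul_sq (y : ℝ) : sqrtSechTwoMul y ^ 2 = 1 / cosh (2 * y) :=
  sq_sqrt (by positivity)

lemma hasDerivAt_sqrtSechTwoMul (y : ℝ) :
    HasDerivAt sqrtSechTwoMul (-(sinh (2 * y) * sqrtSechTwoMul y ^ 3)) y := by
  have hc0 := (cosh_pos (2 * y)).ne'
  have hq0 : sqrtSechTwoMul y ≠ 0 := (sqrt_pos.mpr (by positivity)).ne'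
  refine (((hasDerivAt_const y (1 : ℝ)).fun_div ((hasDerivAt_id' y).const_mul 2).cosh hc0).sqrt
    (by positivity)).congr_deriv ?_
  change _ / (2 * sqrtSechTwoMul y) = _
  field_simp
  rw [show sqrtSechTwoMul y ^ 4 = (sqrtSechTwoMul y ^ 2) ^ 2 by ring, sqrtSechTwoMul_sq]
  field_simp
  ring

lemma deriv_deriv_pow_five_mul_dilation_eq (a y : ℝ) :
    deriv (deriv fun z => (a * sqrtSechTwoMul z) ^ 5) y
        * (-(1 / 2) * (a * sqrtSechTwoMul y / 2 + y * deriv (fun z => a * sqrtSechTwoMul z) y))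
      = 5 * a ^ 6 / 2 * quinticIntegrand y := by
  have hq := hasDerivAt_sqrtSechTwoMul
  have hd1 : deriv (fun z => (a * sqrtSechTwoMul z) ^ 5)
      = fun z => -5 * a ^ 5 * (sinh (2 * z) * sqrtSechTwoMul z ^ 7) :=
    funext fun z => ((((hq z).const_mul a).fun_pow 5).congr_deriv (by ring)).deriv
  have hd2 : HasDerivAt (fun z => -5 * a ^ 5 * (sinh (2 * z) * sqrtSechTwoMul z ^ 7)) _ y :=
    ((((hasDerivAt_id' y).const_mul 2).sinh.fun_mul ((hq y).fun_pow 7)).const_mul (-5 * a ^ 5))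
  rw [((hq y).const_mul a).deriv, hd1, hd2.deriv]
  set q := sqrtSechTwoMul y
  set c := cosh (2 * y)
  set s := sinh (2 * y)
  calc _ = 5 * a ^ 6 / 2 * (c * (q ^ 2) ^ 4 - 2 * c * y * s * (q ^ 2) ^ 5
        - 7 / 2 * s ^ 2 * (q ^ 2) ^ 5 + 7 * y * s * s ^ 2 * (q ^ 2) ^ 6) := by
        push_cast
        ring
    _ = 5 * a ^ 6 / 2 * quinticIntegrand y := by
        rw [sqrtSechTwoMul_sq, sinh_sq]
        simp only [quinticIntegrand]
        field_simp
        ring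

lemma three_rpow_one_div_four_pow_six : ((3 : ℝ) ^ ((1 : ℝ) / 4)) ^ 6 = 3 * √3 := by
  rw [← rpow_mul_natCast (by norm_num), sqrt_eq_rpow,
    show (1 : ℝ) / 4 * (6 : ℕ) = 1 + 1 / 2 by norm_num, rpow_add (by norm_num), rpow_one]

/-- Explicit quintic-term integral of the quintic Townes soliton
`R(y) = 3^(1/4) sech(2y)^(1/2)` against `G(y) = -(1/2)(R(y)/2 + y R'(y))`:
`∫ (R⁵)'' · G = (13√3/16)π`. -/
theorem townes_quintic_term_integral (R G : ℝ → ℝ)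
    (hR : ∀ y : ℝ, R y = 3 ^ ((1 : ℝ) / 4) * (1 / Real.cosh (2 * y)) ^ ((1 : ℝ) / 2))
    (hG : ∀ y : ℝ, G y = -(1 / 2) * (R y / 2 + y * deriv R y)) :
    ∫ y : ℝ, deriv (deriv (fun z => R z ^ 5)) y * G y
      = 13 * Real.sqrt 3 / 16 * Real.pi := by
  obtain rfl : R = fun y => 3 ^ ((1 : ℝ) / 4) * sqrtSechTwoMul y :=
    funext fun y => by rw [hR, sqrtSechTwoMul, sqrt_eq_rpow]
  simp_rw [hG, deriv_deriv_pow_five_mul_dilation_eq]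
  rw [integral_const_mul, integral_quinticIntegrand, three_rpow_one_div_four_pow_six]
  ring
end
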